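/- Let T be a hyperbolic cylinder with core geodesic of length l, and let V ⊆ T be an essential annulus whose two boundary components are graphs over the core geodesic, given by piecewise smooth functions r₁ > r₂ : [0,l] → ℝ in Fermi coordinates. Then L(∂V)² − |V|² ≥ 4l², with equality if and only if r₁ and r₂ are constant with r₁ = −r₂. -/

import Mathlib

/-!
Along each boundary curve the length element `√(ṙ² + 1) cosh r` is at least `cosh r`, with
equality only where `ṙ = 0`. Pointwise, `cosh a + cosh b ≥ √((sinh a - sinh b)² + 2²)` because
`(cosh a + cosh b)² - (sinh a - sinh b)² = 2 (1 + cosh (a + b)) ≥ 4`; integrating the plane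
vector `(sinh r₁ - sinh r₂, 2)` and using the triangle inequality for integrals gives
`L ≥ √(|V|² + 4 l²)`. In the equality case both curves are therefore constant, `rᵢ ≡ cᵢ`, and the
same identity gives `L² - |V|² = 2 l² (1 + cosh (c₁ + c₂))`, which is `4 l²` iff `c₂ = -c₁`.
-/

noncomputable section
open Real intervalIntegral
open MeasureTheory Set

def fermiGraphLength (l : ℝ) (r : ℝ → ℝ) : ℝ :=
  ∫ s in (0:ℝ)..l, √(deriv r s ^ 2 + 1) * cosh (r s)

theorem sqrt_sq_integral_add_sq_le_integral_sqrt {f : ℝ → ℝ} (hf : Continuous f) (c : ℝ)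
    {l : ℝ} (hl : 0 ≤ l) :
    √((∫ s in (0:ℝ)..l, f s) ^ 2 + (l * c) ^ 2) ≤ ∫ s in (0:ℝ)..l, √(f s ^ 2 + c ^ 2) := by
  have hint : (∫ s in (0:ℝ)..l, ((f s : ℂ) + c * Complex.I))
      = ((∫ s in (0:ℝ)..l, f s : ℝ) : ℂ) + (l * c : ℝ) * Complex.I := by
    rw [integral_add (Continuous.intervalIntegrable (by fun_prop) 0 l) intervalIntegrable_const,
      integral_ofReal, intervalIntegral.integral_const, sub_zero, Complex.real_smul,
      Complex.ofReal_mul, mul_assoc]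
  calc √((∫ s in (0:ℝ)..l, f s) ^ 2 + (l * c) ^ 2)
      = ‖∫ s in (0:ℝ)..l, ((f s : ℂ) + c * Complex.I)‖ := by rw [hint, Complex.norm_add_mul_I]
    _ ≤ ∫ s in (0:ℝ)..l, ‖(f s : ℂ) + c * Complex.I‖ := norm_integral_le_integral_norm hl
    _ = ∫ s in (0:ℝ)..l, √(f s ^ 2 + c ^ 2) := by simp only [Complex.norm_add_mul_I]

theorem sq_cosh_add_cosh_sub_sq_sinh_sub_sinh (a b : ℝ) :
    (cosh a + cosh b) ^ 2 - (sinh a - sinh b) ^ 2 = 2 * (1 + cosh (a + b)) := by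
  rw [cosh_add]
  linear_combination cosh_sq_sub_sinh_sq a + cosh_sq_sub_sinh_sq b

theorem sqrt_sq_sinh_sub_sinh_add_sq_two_le (a b : ℝ) :
    √((sinh a - sinh b) ^ 2 + 2 ^ 2) ≤ cosh a + cosh b :=
  (sqrt_le_left (by positivity)).mpr <| by
    nlinarith [sq_cosh_add_cosh_sub_sq_sinh_sub_sinh a b, one_le_cosh (a + b)]

theorem sqrt_sq_integral_sinh_sub_sinh_add_le {r₁ r₂ : ℝ → ℝ} (hr₁ : Continuous r₁)
    (hr₂ : Continuous r₂) {l : ℝ} (hl : 0 ≤ l) :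
    √((∫ s in (0:ℝ)..l, (sinh (r₁ s) - sinh (r₂ s))) ^ 2 + (l * 2) ^ 2)
      ≤ (∫ s in (0:ℝ)..l, cosh (r₁ s)) + ∫ s in (0:ℝ)..l, cosh (r₂ s) := by
  have hc₁ : IntervalIntegrable (fun s => cosh (r₁ s)) volume 0 l :=
    Continuous.intervalIntegrable (by fun_prop) 0 l
  have hc₂ : IntervalIntegrable (fun s => cosh (r₂ s)) volume 0 l :=
    Continuous.intervalIntegrable (by fun_prop) 0 l
  rw [← integral_add hc₁ hc₂]
  refine (sqrt_sq_integral_add_sq_le_integral_sqrt (by fun_prop) 2 hl).trans ?_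
  refine integral_mono_on hl ?_ (hc₁.add hc₂) fun s _ => sqrt_sq_sinh_sub_sinh_add_sq_two_le _ _
  exact Continuous.intervalIntegrable (by fun_prop) 0 l

theorem integral_cosh_le_fermiGraphLength {r : ℝ → ℝ} (hr : ContDiff ℝ 1 r) {l : ℝ}
    (hl : 0 ≤ l) : ∫ s in (0:ℝ)..l, cosh (r s) ≤ fermiGraphLength l r := by
  have hd : Continuous (deriv r) := hr.continuous_deriv le_rfl
  have hr' : Continuous r := hr.continuous
  refine integral_mono_on hl (Continuous.intervalIntegrable (by fun_prop) 0 l)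
    (Continuous.intervalIntegrable (by fun_prop) 0 l) fun s _ => ?_
  exact le_mul_of_one_le_left (cosh_pos _).le (one_le_sqrt.mpr (by nlinarith))

theorem eqOn_of_deriv_ae_eq_zero {r : ℝ → ℝ} (hr : ContDiff ℝ 1 r) {l : ℝ}
    (h : ∀ᵐ s ∂volume.restrict (Ioc 0 l), deriv r s = 0) :
    EqOn r (fun _ => r 0) (Icc 0 l) := by
  intro s hs
  have hzero : ∫ x in (0:ℝ)..s, deriv r x = 0 := by
    rw [integral_of_le hs.1]
    exact integral_eq_zero_of_ae (ae_restrict_of_ae_restrict_of_subset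
      (Ioc_subset_Ioc_right hs.2) h)
  rw [integral_deriv_eq_sub (fun x _ => hr.differentiable one_ne_zero x)
    ((hr.continuous_deriv le_rfl).intervalIntegrable 0 s), sub_eq_zero] at hzero
  exact hzero

theorem eqOn_of_fermiGraphLength_eq_integral_cosh {r : ℝ → ℝ} (hr : ContDiff ℝ 1 r) {l : ℝ}
    (hl : 0 ≤ l) (h : fermiGraphLength l r = ∫ s in (0:ℝ)..l, cosh (r s)) :
    EqOn r (fun _ => r 0) (Icc 0 l) := by
  have hd : Continuous (deriv r) := hr.continuous_deriv le_rfl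
  have hr' : Continuous r := hr.continuous
  have hexcess : ∫ s in (0:ℝ)..l, (√(deriv r s ^ 2 + 1) - 1) * cosh (r s) = 0 := by
    simp only [sub_mul, one_mul]
    rw [integral_sub (Continuous.intervalIntegrable (by fun_prop) 0 l)
      (Continuous.intervalIntegrable (by fun_prop) 0 l)]
    exact sub_eq_zero.mpr h
  have hnonneg : ∀ s, 0 ≤ (√(deriv r s ^ 2 + 1) - 1) * cosh (r s) := fun s =>
    mul_nonneg (sub_nonneg.mpr (one_le_sqrt.mpr (by nlinarith))) (cosh_pos _).le
  refine eqOn_of_deriv_ae_eq_zero hr ?_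
  filter_upwards [(integral_eq_zero_iff_of_le_of_nonneg_ae hl (ae_of_all _ hnonneg)
    (Continuous.intervalIntegrable (by fun_prop) 0 l)).mp hexcess] with s hs
  have hsqrt := (mul_eq_zero.mp hs).resolve_right (cosh_pos _).ne'
  rw [sub_eq_zero, sqrt_eq_one] at hsqrt
  simpa using hsqrt

theorem fermiGraphLength_of_eqOn_const {r : ℝ → ℝ} {l c : ℝ} (hl : 0 ≤ l)
    (h : EqOn r (fun _ => c) (Icc 0 l)) : fermiGraphLength l r = l * cosh c := by
  have hinterior : EqOn (fun s => √(deriv r s ^ 2 + 1) * cosh (r s)) (fun _ => cosh c)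
      (Ioo 0 l) := fun s hs => by
    have hloc : r =ᶠ[nhds s] fun _ => c := Filter.eventually_of_mem (Ioo_mem_nhds hs.1 hs.2)
      fun y hy => h (Ioo_subset_Icc_self hy)
    simp [hloc.deriv_eq, h (Ioo_subset_Icc_self hs)]
  rw [fermiGraphLength, integral_of_le hl, integral_Ioc_eq_integral_Ioo,
    setIntegral_congr_fun measurableSet_Ioo hinterior, ← integral_Ioc_eq_integral_Ioo,
    ← integral_of_le hl, intervalIntegral.integral_const, sub_zero, smul_eq_mul]

theorem integral_sinh_sub_sinh_of_eqOn_const {r₁ r₂ : ℝ → ℝ} {l c₁ c₂ : ℝ} (hl : 0 ≤ l)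
    (h₁ : EqOn r₁ (fun _ => c₁) (Icc 0 l)) (h₂ : EqOn r₂ (fun _ => c₂) (Icc 0 l)) :
    ∫ s in (0:ℝ)..l, (sinh (r₁ s) - sinh (r₂ s)) = l * (sinh c₁ - sinh c₂) := by
  rw [integral_congr (g := fun _ => sinh c₁ - sinh c₂) fun s hs => ?_,
    intervalIntegral.integral_const, sub_zero, smul_eq_mul]
  rw [uIcc_of_le hl] at hs
  simp only [h₁ hs, h₂ hs]

theorem Real.cosh_eq_one_iff {x : ℝ} : cosh x = 1 ↔ x = 0 :=
  ⟨fun h => by_contra fun hx => (one_lt_cosh.mpr hx).ne' h, fun h => h ▸ cosh_zero⟩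

theorem fermiGraphLength_add_sq_sub_sq_eq_iff_of_eqOn_const {r₁ r₂ : ℝ → ℝ} {l c₁ c₂ : ℝ}
    (hl : 0 < l) (h₁ : EqOn r₁ (fun _ => c₁) (Icc 0 l)) (h₂ : EqOn r₂ (fun _ => c₂) (Icc 0 l)) :
    (fermiGraphLength l r₁ + fermiGraphLength l r₂) ^ 2
        - (∫ s in (0:ℝ)..l, (sinh (r₁ s) - sinh (r₂ s))) ^ 2 = 4 * l ^ 2 ↔ c₂ = -c₁ := by
  rw [fermiGraphLength_of_eqOn_const hl.le h₁, fermiGraphLength_of_eqOn_const hl.le h₂,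
    integral_sinh_sub_sinh_of_eqOn_const hl.le h₁ h₂]
  calc (l * cosh c₁ + l * cosh c₂) ^ 2 - (l * (sinh c₁ - sinh c₂)) ^ 2 = 4 * l ^ 2
      ↔ 2 * l ^ 2 * (1 + cosh (c₁ + c₂)) = 2 * l ^ 2 * 2 := by
        rw [show (l * cosh c₁ + l * cosh c₂) ^ 2 - (l * (sinh c₁ - sinh c₂)) ^ 2
          = l ^ 2 * ((cosh c₁ + cosh c₂) ^ 2 - (sinh c₁ - sinh c₂) ^ 2) by ring,
          sq_cosh_add_cosh_sub_sq_sinh_sub_sinh]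
        ring_nf
    _ ↔ cosh (c₁ + c₂) = 1 := by
        rw [mul_right_inj' (by positivity)]
        constructor <;> intro h <;> linarith
    _ ↔ c₂ = -c₁ := by rw [cosh_eq_one_iff, add_comm, add_eq_zero_iff_eq_neg]

theorem graph_annulus_length_area_general (l : ℝ) (hl : 0 < l) (r₁ r₂ : ℝ → ℝ)
    (h₁ : ContDiff ℝ 1 r₁) (h₂ : ContDiff ℝ 1 r₂)
    (A L : ℝ)
    (hA : A = ∫ s in (0:ℝ)..l, (Real.sinh (r₁ s) - Real.sinh (r₂ s)))
    (hL : L = (∫ s in (0:ℝ)..l, Real.sqrt ((deriv r₁ s) ^ 2 + 1) * Real.cosh (r₁ s))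
            + (∫ s in (0:ℝ)..l, Real.sqrt ((deriv r₂ s) ^ 2 + 1) * Real.cosh (r₂ s))) :
    L ^ 2 - A ^ 2 ≥ 4 * l ^ 2 ∧
      (L ^ 2 - A ^ 2 = 4 * l ^ 2 ↔
        ∃ c : ℝ, ∀ s ∈ Set.Icc (0:ℝ) l, r₁ s = c ∧ r₂ s = -c) := by
  change L = fermiGraphLength l r₁ + fermiGraphLength l r₂ at hL
  have hC₁ := integral_cosh_le_fermiGraphLength h₁ hl.le
  have hC₂ := integral_cosh_le_fermiGraphLength h₂ hl.le
  have hC := hA ▸ sqrt_sq_integral_sinh_sub_sinh_add_le h₁.continuous h₂.continuous hl.le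
  have hL₀ : 0 ≤ L := by linarith [sqrt_nonneg (A ^ 2 + (l * 2) ^ 2)]
  have hbound : A ^ 2 + (l * 2) ^ 2 ≤ L ^ 2 := (sqrt_le_left hL₀).mp (by linarith)
  refine ⟨by linarith, fun hE => ?_, fun ⟨c, hc⟩ => ?_⟩
  · have hLA : L = √(A ^ 2 + (l * 2) ^ 2) := by
      rw [← sqrt_sq hL₀]; congr 1; linarith
    have hr₁ := eqOn_of_fermiGraphLength_eq_integral_cosh h₁ hl.le (by linarith)
    have hr₂ := eqOn_of_fermiGraphLength_eq_integral_cosh h₂ hl.le (by linarith)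
    have hc := (fermiGraphLength_add_sq_sub_sq_eq_iff_of_eqOn_const hl hr₁ hr₂).mp (hA ▸ hL ▸ hE)
    exact ⟨r₁ 0, fun s hs => ⟨hr₁ hs, hc ▸ hr₂ hs⟩⟩
  · rw [hA, hL]
    exact (fermiGraphLength_add_sq_sub_sq_eq_iff_of_eqOn_const hl (fun s hs => (hc s hs).1)
      (fun s hs => (hc s hs).2)).mpr rfl

theorem graph_annulus_length_area (l : ℝ) (hl : 0 < l) (r₁ r₂ : ℝ → ℝ)
    (h₁ : ContDiff ℝ 1 r₁) (h₂ : ContDiff ℝ 1 r₂)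
    (hper₁ : r₁ 0 = r₁ l) (hper₂ : r₂ 0 = r₂ l)
    (hord : ∀ s ∈ Set.Icc (0:ℝ) l, r₂ s < r₁ s)
    (A L : ℝ)
    (hA : A = ∫ s in (0:ℝ)..l, (Real.sinh (r₁ s) - Real.sinh (r₂ s)))
    (hL : L = (∫ s in (0:ℝ)..l, Real.sqrt ((deriv r₁ s) ^ 2 + 1) * Real.cosh (r₁ s))
            + (∫ s in (0:ℝ)..l, Real.sqrt ((deriv r₂ s) ^ 2 + 1) * Real.cosh (r₂ s))) :
    L ^ 2 - A ^ 2 ≥ 4 * l ^ 2 ∧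
      (L ^ 2 - A ^ 2 = 4 * l ^ 2 ↔
        ∃ c : ℝ, ∀ s ∈ Set.Icc (0:ℝ) l, r₁ s = c ∧ r₂ s = -c) :=
  graph_annulus_length_area_general l hl r₁ r₂ h₁ h₂ A L hA hL
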